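/- arXiv:2503.12596 — 2 statements merged into one kernel-verified Lean document; each statement's English description precedes it below -/
import Mathlib

section
/- Suppose b = 0 and (x₁*, x₂*) is a folded equilibrium with x₂* = 2/√3 and x₁* > 2/√3 satisfying k(φ(x₁*) - φ(x₂*)) = c - 2/√3. If 2/√3 < c < (x₁* + 2/√3)/2, then k < 0 and det DH(x₁*, x₂*) < 0, so the folded equilibrium is a saddle of the desingularized slow flow. -/
open Polynomial

noncomputable def φ : ℝ → ℝ := fun x => 4 * x - x ^ 3

noncomputable def H₁ (b c k : ℝ) (x₁ x₂ : ℝ) : ℝ :=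
  (deriv φ x₂ / deriv φ x₁) * (x₁ - (b + k) * φ x₁ + k * φ x₂ - c)

noncomputable def H₂ (b c k : ℝ) (x₁ x₂ : ℝ) : ℝ :=
  x₂ - (b + k) * φ x₂ + k * φ x₁ - c

noncomputable def DH (b c k : ℝ) (x₁ x₂ : ℝ) : Matrix (Fin 2) (Fin 2) ℝ :=
  !![deriv (fun t => H₁ b c k t x₂) x₁, deriv (fun t => H₁ b c k x₁ t) x₂;
     deriv (fun t => H₂ b c k t x₂) x₁, deriv (fun t => H₂ b c k x₁ t) x₂]

lemma φ_hasDeriv (x : ℝ) : HasDerivAt φ (4 - 3 * x ^ 2) x := by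
  have h := ((hasDerivAt_id x).const_mul 4).sub (hasDerivAt_pow 3 x)
  have h2 : HasDerivAt φ _ x := h
  convert h2 using 1
  norm_num

lemma φ_deriv (x : ℝ) : deriv φ x = 4 - 3 * x ^ 2 := (φ_hasDeriv x).deriv

lemma entry00 (c k x₁ x₂ : ℝ) (h0 : deriv φ x₂ = 0) :
    deriv (fun t => H₁ 0 c k t x₂) x₁ = 0 := by
  have : (fun t => H₁ 0 c k t x₂) = fun _ => (0 : ℝ) := by
    funext t; simp [H₁, h0]
  rw [this]; simp

lemma entry01 (c k x₁ x₂ : ℝ) (h0 : 4 - 3 * x₂ ^ 2 = 0) :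
    deriv (fun t => H₁ 0 c k x₁ t) x₂ =
      (-6 * x₂ / (4 - 3 * x₁ ^ 2)) * (x₁ - (0 + k) * φ x₁ + k * φ x₂ - c) := by
  have hu : HasDerivAt (fun t : ℝ => deriv φ t / deriv φ x₁) (-6 * x₂ / (4 - 3 * x₁ ^ 2)) x₂ := by
    have h1 : HasDerivAt (fun t : ℝ => (4 - 3 * t ^ 2) / (4 - 3 * x₁ ^ 2))
        ((0 - 3 * (2 * x₂)) / (4 - 3 * x₁ ^ 2)) x₂ := by
      simpa using ((hasDerivAt_const x₂ (4:ℝ)).sub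
        ((hasDerivAt_pow 2 x₂).const_mul 3)).div_const (4 - 3 * x₁ ^ 2)
    have h2 : (fun t : ℝ => deriv φ t / deriv φ x₁) =
        fun t => (4 - 3 * t ^ 2) / (4 - 3 * x₁ ^ 2) := by
      funext t; rw [φ_deriv, φ_deriv]
    rw [h2]
    convert h1 using 1; ring
  have hv : HasDerivAt (fun t : ℝ => x₁ - (0 + k) * φ x₁ + k * φ t - c)
      (k * (4 - 3 * x₂ ^ 2)) x₂ := by
    have := (((φ_hasDeriv x₂).const_mul k).const_add (x₁ - (0 + k) * φ x₁)).sub_const c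
    simpa using this
  have h := hu.mul hv
  have heq : (fun t => H₁ 0 c k x₁ t) =
      (fun t : ℝ => (deriv φ t / deriv φ x₁) * (x₁ - (0 + k) * φ x₁ + k * φ t - c)) := by
    funext t; rfl
  rw [heq, show deriv (fun t : ℝ => (deriv φ t / deriv φ x₁) * (x₁ - (0 + k) * φ x₁ + k * φ t - c)) x₂ = _ from h.deriv, φ_deriv, h0]
  ring

lemma entry10 (c k x₁ x₂ : ℝ) :
    deriv (fun t => H₂ 0 c k t x₂) x₁ = k * (4 - 3 * x₁ ^ 2) := by
  have h : HasDerivAt (fun t => H₂ 0 c k t x₂) (k * (4 - 3 * x₁ ^ 2)) x₁ := by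
    have := (((φ_hasDeriv x₁).const_mul k).const_add (x₂ - (0 + k) * φ x₂)).sub_const c
    simpa [H₂, add_sub_assoc, sub_eq_add_neg, add_comm, add_left_comm, add_assoc] using this
  exact h.deriv

lemma entry11 (c k x₁ x₂ : ℝ) :
    deriv (fun t => H₂ 0 c k x₁ t) x₂ = 1 - k * (4 - 3 * x₂ ^ 2) := by
  have h : HasDerivAt (fun t => H₂ 0 c k x₁ t) (1 - (0 + k) * (4 - 3 * x₂ ^ 2)) x₂ := by
    have := (((hasDerivAt_id x₂).sub ((φ_hasDeriv x₂).const_mul (0 + k))).add_const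
      (k * φ x₁)).sub_const c
    simpa [H₂, mul_comm] using this
  simpa using h.deriv

lemma charpoly_fin_two (M : Matrix (Fin 2) (Fin 2) ℝ) :
    M.charpoly = X ^ 2 - C (M 0 0 + M 1 1) * X +
      C (M 0 0 * M 1 1 - M 0 1 * M 1 0) := by
  show (Matrix.charmatrix M).det = _
  rw [Matrix.det_fin_two, Matrix.charmatrix_apply_eq, Matrix.charmatrix_apply_eq,
    Matrix.charmatrix_apply_ne _ _ _ (by decide), Matrix.charmatrix_apply_ne _ _ _ (by decide)]
  simp only [map_add, map_sub, map_mul]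
  ring

theorem stmt_12 (c k : ℝ) (hk : k ≠ 0) (x₁ x₂ : ℝ)
    (hx₂ : x₂ = 2 / Real.sqrt 3) (hx₁ : x₁ > 2 / Real.sqrt 3)
    (heq : k * (φ x₁ - φ x₂) = c - 2 / Real.sqrt 3)
    (hc₁ : 2 / Real.sqrt 3 < c) (hc₂ : c < (x₁ + 2 / Real.sqrt 3) / 2) :
    k < 0 ∧ (DH 0 c k x₁ x₂).det < 0 ∧
    ∃ a b : ℝ, (DH 0 c k x₁ x₂).charpoly = (X - C a) * (X - C b) ∧ a < 0 ∧ 0 < b := by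
  have hs3 : (0:ℝ) < Real.sqrt 3 := Real.sqrt_pos.2 (by norm_num)
  have hs3sq : Real.sqrt 3 ^ 2 = 3 := Real.sq_sqrt (by norm_num)
  have hx₂pos : 0 < x₂ := by rw [hx₂]; positivity
  have hx₂sq : x₂ ^ 2 = 4 / 3 := by
    rw [hx₂, div_pow, hs3sq]; norm_num
  have h0 : 4 - 3 * x₂ ^ 2 = 0 := by rw [hx₂sq]; ring
  have hx12 : x₂ < x₁ := by rw [hx₂]; exact hx₁
  have hd : 4 - 3 * x₁ ^ 2 < 0 := by nlinarith
  -- k < 0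
  have hφlt : φ x₁ - φ x₂ < 0 := by
    simp only [φ]; nlinarith [sq_nonneg (x₁ + x₂), sq_nonneg (x₁ - x₂)]
  have hcx : 0 < c - 2 / Real.sqrt 3 := by linarith
  have hkneg : k < 0 := by nlinarith
  -- bracket
  have hxc : x₂ = 2 / Real.sqrt 3 := hx₂
  have hB : 0 < x₁ - (0 + k) * φ x₁ + k * φ x₂ - c := by
    have : x₁ - (0 + k) * φ x₁ + k * φ x₂ - c = x₁ - k * (φ x₁ - φ x₂) - c := by ring
    rw [this, heq]
    linarith
  set B := x₁ - (0 + k) * φ x₁ + k * φ x₂ - c with hBdef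
  -- determinant
  have hdderiv : deriv φ x₂ = 0 := by rw [φ_deriv, h0]
  have hDH : DH 0 c k x₁ x₂ =
      !![0, (-6 * x₂ / (4 - 3 * x₁ ^ 2)) * B; k * (4 - 3 * x₁ ^ 2), 1] := by
    rw [DH, entry00 c k x₁ x₂ hdderiv, entry01 c k x₁ x₂ h0, entry10, entry11, h0, hBdef]
    norm_num
  have hdne : (4 - 3 * x₁ ^ 2) ≠ 0 := ne_of_lt hd
  have hdet : (DH 0 c k x₁ x₂).det = 6 * x₂ * B * k := by
    rw [hDH, Matrix.det_fin_two_of]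
    field_simp
    ring
  have hdetneg : (DH 0 c k x₁ x₂).det < 0 := by
    rw [hdet]
    have : 0 < 6 * x₂ * B := by positivity
    exact mul_neg_of_pos_of_neg this hkneg
  refine ⟨hkneg, hdetneg, ?_⟩
  -- charpoly
  set D := (DH 0 c k x₁ x₂).det with hD
  have htr : (DH 0 c k x₁ x₂).trace = 1 := by
    rw [hDH, Matrix.trace_fin_two_of]; ring
  have hDneg : D < 0 := hdetneg
  set s := Real.sqrt (1 - 4 * D) with hs
  have hsq : s ^ 2 = 1 - 4 * D := Real.sq_sqrt (by linarith)
  have hs1 : 1 < s := by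
    have h14 : (1:ℝ) < 1 - 4 * D := by linarith
    calc (1:ℝ) = Real.sqrt 1 := by simp
      _ < s := Real.sqrt_lt_sqrt (by norm_num) h14
  refine ⟨(1 - s) / 2, (1 + s) / 2, ?_, by linarith, by linarith⟩
  have hab : (1 - s) / 2 + (1 + s) / 2 = 1 := by ring
  have hmul : (1 - s) / 2 * ((1 + s) / 2) = D := by nlinarith [hsq]
  have hfactor : (X - C ((1 - s) / 2)) * (X - C ((1 + s) / 2)) =
      X ^ 2 - (C ((1 - s) / 2) + C ((1 + s) / 2)) * X + C ((1 - s) / 2) * C ((1 + s) / 2) := by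
    ring
  have hcp : (DH 0 c k x₁ x₂).charpoly = X ^ 2 - C 1 * X + C D := by
    rw [charpoly_fin_two, hDH]
    have h00 : (!![0, -6 * x₂ / (4 - 3 * x₁ ^ 2) * B; k * (4 - 3 * x₁ ^ 2), 1] : Matrix (Fin 2) (Fin 2) ℝ) 0 0 = 0 := rfl
    have h01 : (!![0, -6 * x₂ / (4 - 3 * x₁ ^ 2) * B; k * (4 - 3 * x₁ ^ 2), 1] : Matrix (Fin 2) (Fin 2) ℝ) 0 1 = -6 * x₂ / (4 - 3 * x₁ ^ 2) * B := rfl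
    have h10 : (!![0, -6 * x₂ / (4 - 3 * x₁ ^ 2) * B; k * (4 - 3 * x₁ ^ 2), 1] : Matrix (Fin 2) (Fin 2) ℝ) 1 0 = k * (4 - 3 * x₁ ^ 2) := rfl
    have h11 : (!![0, -6 * x₂ / (4 - 3 * x₁ ^ 2) * B; k * (4 - 3 * x₁ ^ 2), 1] : Matrix (Fin 2) (Fin 2) ℝ) 1 1 = 1 := rfl
    rw [h00, h01, h10, h11]
    have hD' : D = 0 * 1 - -6 * x₂ / (4 - 3 * x₁ ^ 2) * B * (k * (4 - 3 * x₁ ^ 2)) := by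
      rw [hD, hDH, Matrix.det_fin_two_of]
    rw [← hD']
    congr 1
    · congr 1
      norm_num
  rw [hcp, hfactor, ← C_add, ← C_mul, hab, hmul]
end

section
/- Let x* = 2σ/√3 with σ = ±1 and X = (x*, -x*). The Jacobian DF(X) of F(x₁,x₂) = (φ'(x₂)(x₁-(b+k)φ(x₁)+kφ(x₂)-c), φ'(x₁)(x₂-(b+k)φ(x₂)+kφ(x₁)-c)) has trace 0 and determinant -φ''(x*)²·[(x* - (b+2k)φ(x*))² - c²]. In particular DF(X) has two real eigenvalues of opposite sign (X is a saddle) if and only if |c| < |2/√3 - (b+2k)φ(2/√3)|. -/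
open Polynomial

noncomputable def F₁ (b c k : ℝ) (x₁ x₂ : ℝ) : ℝ :=
  deriv φ x₂ * (x₁ - (b + k) * φ x₁ + k * φ x₂ - c)

noncomputable def F₂ (b c k : ℝ) (x₁ x₂ : ℝ) : ℝ :=
  deriv φ x₁ * (x₂ - (b + k) * φ x₂ + k * φ x₁ - c)

noncomputable def DF (b c k : ℝ) (x₁ x₂ : ℝ) : Matrix (Fin 2) (Fin 2) ℝ :=
  !![deriv (fun t => F₁ b c k t x₂) x₁, deriv (fun t => F₁ b c k x₁ t) x₂;
     deriv (fun t => F₂ b c k t x₂) x₁, deriv (fun t => F₂ b c k x₁ t) x₂]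

lemma hdphi (t : ℝ) : HasDerivAt φ (4 - 3 * t ^ 2) t := by
  unfold φ
  have h := ((hasDerivAt_id t).const_mul (4:ℝ)).sub (hasDerivAt_pow 3 t)
  exact h.congr_deriv (by norm_num)

lemma dphi : deriv φ = fun t => 4 - 3 * t ^ 2 := by
  funext t; exact (hdphi t).deriv

lemma dphi' (t : ℝ) : deriv φ t = 4 - 3 * t ^ 2 := (hdphi t).deriv

lemma hddphi (t : ℝ) : HasDerivAt (deriv φ) (-(6 * t)) t := by
  rw [dphi]
  have h := (hasDerivAt_const t (4:ℝ)).sub ((hasDerivAt_pow 2 t).const_mul (3:ℝ))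
  exact h.congr_deriv (by ring)

lemma ddphi (t : ℝ) : deriv (deriv φ) t = -(6 * t) := (hddphi t).deriv

set_option maxHeartbeats 1000000 in
theorem stmt_14 (b c k : ℝ) (hk : k ≠ 0) (σ : ℝ) (hσ : σ = 1 ∨ σ = -1)
    (x : ℝ) (hx : x = 2 * σ / Real.sqrt 3) :
    (DF b c k x (-x)).trace = 0 ∧
    (DF b c k x (-x)).det =
      -(deriv (deriv φ) x) ^ 2 * ((x - (b + 2 * k) * φ x) ^ 2 - c ^ 2) ∧
    ((∃ a b' : ℝ, (DF b c k x (-x)).charpoly = (X - C a) * (X - C b') ∧ a < 0 ∧ 0 < b') ↔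
      |c| < |2 / Real.sqrt 3 - (b + 2 * k) * φ (2 / Real.sqrt 3)|) := by
  have s3 : (Real.sqrt 3) ^ 2 = 3 := Real.sq_sqrt (by norm_num)
  have s3ne : Real.sqrt 3 ≠ 0 := by positivity
  have hσ2 : σ ^ 2 = 1 := by rcases hσ with h | h <;> simp [h]
  have hx2 : x ^ 2 = 4 / 3 := by
    rw [hx, div_pow, mul_pow, hσ2, s3]; norm_num
  have hdx : deriv φ x = 0 := by rw [dphi']; nlinarith [hx2]
  have hdnx : deriv φ (-x) = 0 := by rw [dphi']; nlinarith [hx2]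
  have e11 : deriv (fun t => F₁ b c k t (-x)) x = 0 := by
    have h : HasDerivAt (fun t => F₁ b c k t (-x))
        (deriv φ (-x) * (1 - (b + k) * (4 - 3 * x ^ 2))) x := by
      have h1 := ((((hasDerivAt_id x).sub ((hdphi x).const_mul (b + k))).add_const
        (k * φ (-x))).sub_const c).const_mul (deriv φ (-x))
      exact h1.congr_deriv (by ring)
    rw [h.deriv, hdnx]; ring
  have e22 : deriv (fun t => F₂ b c k x t) (-x) = 0 := by
    have h : HasDerivAt (fun t => F₂ b c k x t)
        (deriv φ x * (1 - (b + k) * (4 - 3 * (-x) ^ 2))) (-x) := by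
      have h1 := ((((hasDerivAt_id (-x)).sub ((hdphi (-x)).const_mul (b + k))).add_const
        (k * φ x)).sub_const c).const_mul (deriv φ x)
      exact h1.congr_deriv (by ring)
    rw [h.deriv, hdx]; ring
  set A := x - (b + 2 * k) * φ x with hA
  have hφneg : φ (-x) = -φ x := by simp [φ]; ring
  have e12 : deriv (fun t => F₁ b c k x t) (-x) = 6 * x * (A - c) := by
    have hg : HasDerivAt (fun t => x - (b + k) * φ x + k * φ t - c)
        (k * (4 - 3 * (-x) ^ 2)) (-x) :=
      (((hdphi (-x)).const_mul k).const_add (x - (b + k) * φ x)).sub_const c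
    have h : HasDerivAt (fun t => F₁ b c k x t)
        (-(6 * (-x)) * (x - (b + k) * φ x + k * φ (-x) - c) +
          deriv φ (-x) * (k * (4 - 3 * (-x) ^ 2))) (-x) := (hddphi (-x)).mul hg
    rw [h.deriv, hdnx, hφneg, hA]; ring
  have e21 : deriv (fun t => F₂ b c k t (-x)) x = 6 * x * (A + c) := by
    have hg : HasDerivAt (fun t => -x - (b + k) * φ (-x) + k * φ t - c)
        (k * (4 - 3 * x ^ 2)) x :=
      (((hdphi x).const_mul k).const_add (-x - (b + k) * φ (-x))).sub_const c
    have h : HasDerivAt (fun t => F₂ b c k t (-x))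
        (-(6 * x) * (-x - (b + k) * φ (-x) + k * φ x - c) +
          deriv φ x * (k * (4 - 3 * x ^ 2))) x := (hddphi x).mul hg
    rw [h.deriv, hdx, hφneg, hA]; ring
  have hDF : DF b c k x (-x) = !![0, 6 * x * (A - c); 6 * x * (A + c), 0] := by
    rw [DF, e11, e12, e21, e22]
  have htr : (DF b c k x (-x)).trace = 0 := by
    rw [hDF]; simp [Matrix.trace_fin_two]
  have hdet : (DF b c k x (-x)).det = -(36 * x ^ 2) * (A ^ 2 - c ^ 2) := by
    rw [hDF]; simp [Matrix.det_fin_two]; ring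
  refine ⟨htr, ?_, ?_⟩
  · rw [hdet, ddphi]; ring
  · have oddφ : ∀ y : ℝ, φ (-y) = -φ y := by intro y; simp [φ]; ring
    have hAabs : |A| = |2 / Real.sqrt 3 - (b + 2 * k) * φ (2 / Real.sqrt 3)| := by
      rcases hσ with h | h
      · rw [hA, hx, h]; norm_num
      · rw [hA, hx, h, show (2:ℝ) * (-1) / Real.sqrt 3 = -(2 / Real.sqrt 3) by ring, oddφ,
          show -(2 / Real.sqrt 3) - (b + 2 * k) * -φ (2 / Real.sqrt 3) =
            -(2 / Real.sqrt 3 - (b + 2 * k) * φ (2 / Real.sqrt 3)) by ring, abs_neg]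
    rw [← hAabs]
    have hcp : (DF b c k x (-x)).charpoly = X ^ 2 - C (48 * (A ^ 2 - c ^ 2)) := by
      rw [hDF, Matrix.charpoly, Matrix.det_fin_two]
      rw [Matrix.charmatrix_apply_eq, Matrix.charmatrix_apply_eq,
        Matrix.charmatrix_apply_ne _ _ _ (show (0:Fin 2) ≠ 1 by decide),
        Matrix.charmatrix_apply_ne _ _ _ (show (1:Fin 2) ≠ 0 by decide)]
      norm_num
      have h1 : C (6:ℝ) * C x * (C (6:ℝ) * C x) = C (48:ℝ) := by
        rw [← C_mul, ← C_mul]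
        exact congrArg C (by nlinarith [hx2])
      linear_combination (C c ^ 2 - C A ^ 2) * h1
    constructor
    · rintro ⟨a, b', hab, ha, hb⟩
      rw [hcp] at hab
      have := congrArg (eval a) hab
      simp [eval_mul, eval_sub, eval_pow] at this
      have hD : 48 * (A ^ 2 - c ^ 2) = a ^ 2 := by linarith
      have hane : a ≠ 0 := ne_of_lt ha
      have ha2 : 0 < a ^ 2 := by positivity
      have hc2 : c ^ 2 < A ^ 2 := by nlinarith
      exact lt_of_pow_lt_pow_left₀ 2 (abs_nonneg A)
        (by rwa [sq_abs, sq_abs] : |c| ^ 2 < |A| ^ 2)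
    · intro h
      have hc2 : c ^ 2 < A ^ 2 := by
        have h2 := mul_self_lt_mul_self (abs_nonneg c) h
        nlinarith [abs_mul_abs_self c, abs_mul_abs_self A]
      have hDpos : 0 < 48 * (A ^ 2 - c ^ 2) := by nlinarith
      set d := Real.sqrt (48 * (A ^ 2 - c ^ 2)) with hd
      have hdpos : 0 < d := Real.sqrt_pos.mpr hDpos
      have hd2 : d ^ 2 = 48 * (A ^ 2 - c ^ 2) := Real.sq_sqrt hDpos.le
      refine ⟨-d, d, ?_, by linarith, hdpos⟩
      have expand : ((X : ℝ[X]) - C (-d)) * (X - C d) = X ^ 2 - C (d ^ 2) := by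
        rw [map_neg, sub_neg_eq_add, map_pow]; ring
      rw [hcp, expand, hd2]
end
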